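/- arXiv:math/0606663 — 3 statements merged into one kernel-verified Lean document; each statement's English description precedes it below -/
import Mathlib

section
/- Let k ≥ 2 and α ∈ ℝ^k. For each surjection σ : [k] → [m], define (σα)_j = Σ_{i : σ(i)=j} α_i. Let Λ_{k,m}(x, α) = Σ_{σ : [k]↠[m]} Σ_{j=1}^m (σα)_j. Then Λ_k(x, α) := Σ_{m=1}^k ((-1)^{m-1}/m) Λ_{k,m}(x, α) = 0. -/
/-!
Every surjection contributes `∑ i, α i`, so the sum is `∑ α` times
`∑ m, (-1)^(m-1)/m · S(k, m)`, where `S(k, m) = surjCount k m` counts surjections `[k] ↠ [m]`.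
Splitting off the image of the first point gives `S(k+1, m+1) = (m+1) (S(k, m+1) + S(k, m))`,
which makes the alternating sum telescope to `S(k-1, 0) ± S(k-1, k) = 0` once `k ≥ 2`.
-/

open Finset Function

def surjCount (k m : ℕ) : ℕ := #{σ : Fin k → Fin m | Surjective σ}

theorem surjCount_zero_right {k : ℕ} (hk : k ≠ 0) : surjCount k 0 = 0 := by
  have : IsEmpty (Fin k → Fin 0) := ⟨fun f => (f ⟨0, Nat.pos_of_ne_zero hk⟩).elim0⟩
  simp [surjCount]

theorem surjCount_eq_zero_of_lt {k m : ℕ} (h : k < m) : surjCount k m = 0 := by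
  rw [surjCount, card_eq_zero, filter_eq_empty_iff]
  intro σ _ hσ
  have := Fintype.card_le_of_surjective σ hσ
  simp only [Fintype.card_fin] at this
  omega

theorem Set.insert_eq_univ_iff {α : Type*} {s : Set α} {a : α} :
    insert a s = Set.univ ↔ s = Set.univ ∨ s = {a}ᶜ := by
  refine ⟨fun h => ?_, by
    rintro (rfl | rfl)
    exacts [Set.insert_eq_of_mem (Set.mem_univ a), by rw [Set.insert_eq, Set.union_compl_self]]⟩
  by_cases ha : a ∈ s
  · exact .inl (by rwa [Set.insert_eq_of_mem ha] at h)
  · refine .inr (Set.ext fun x => ⟨fun hx hxa => ha (hxa ▸ hx), fun hxa => ?_⟩)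
    exact (h ▸ Set.mem_univ x : x ∈ insert a s).resolve_left hxa

open Classical in
theorem card_range_eq_compl_singleton (k : ℕ) {m : ℕ} (j : Fin (m + 1)) :
    #{f : Fin k → Fin (m + 1) | Set.range f = {j}ᶜ} = surjCount k m := by
  rw [surjCount, ← card_image_of_injective _ (Fin.succAbove_right_injective (p := j)).comp_left]
  congr 1
  ext f
  simp only [mem_filter, mem_univ, true_and, mem_image]
  constructor
  · intro hf
    obtain ⟨g, rfl⟩ :=
      Set.range_subset_range_iff_exists_comp.1 (hf.trans (Fin.range_succAbove j).symm).le
    refine ⟨g, ?_, rfl⟩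
    rw [← Set.range_eq_univ]
    rw [Set.range_comp, ← Fin.range_succAbove j, ← Set.image_univ (f := j.succAbove)] at hf
    exact Set.image_injective.2 Fin.succAbove_right_injective hf
  · rintro ⟨g, hg, rfl⟩
    rw [Set.range_comp, hg.range_eq, Set.image_univ, Fin.range_succAbove]

theorem card_surjective_cons (k : ℕ) {m : ℕ} (j : Fin (m + 1)) :
    #{f : Fin k → Fin (m + 1) | Surjective (Fin.cons j f : Fin (k + 1) → Fin (m + 1))} =
      surjCount k (m + 1) + surjCount k m := by
  classical
  have hsplit (f : Fin k → Fin (m + 1)) :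
      Surjective (Fin.cons j f : Fin (k + 1) → Fin (m + 1)) ↔
        Surjective f ∨ Set.range f = {j}ᶜ := by
    rw [← Set.range_eq_univ, ← Set.range_eq_univ, Fin.range_cons, Set.insert_eq_univ_iff]
  rw [filter_congr (fun f _ => hsplit f), filter_or, card_union_of_disjoint, surjCount,
    card_range_eq_compl_singleton]
  rw [disjoint_filter]
  intro f _ hf hj
  simpa [hf.range_eq] using congrArg (j ∈ ·) hj

theorem surjCount_succ_succ (k m : ℕ) :
    surjCount (k + 1) (m + 1) = (m + 1) * (surjCount k (m + 1) + surjCount k m) := by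
  calc surjCount (k + 1) (m + 1)
      = ∑ j : Fin (m + 1),
          #{f : Fin k → Fin (m + 1) |
            Surjective (Fin.cons j f : Fin (k + 1) → Fin (m + 1))} := by
        rw [surjCount, card_filter, ← (Fin.consEquiv fun _ => Fin (m + 1)).sum_comp,
          Fintype.sum_prod_type]
        simp only [card_filter]
        rfl
    _ = (m + 1) * (surjCount k (m + 1) + surjCount k m) := by
        simp [card_surjective_cons]

theorem sum_Icc_alternating_surjCount {k : ℕ} (hk : 2 ≤ k) :
    ∑ m ∈ Icc 1 k, ((-1 : ℝ) ^ (m - 1) / m) * surjCount k m = 0 := by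
  obtain ⟨K, rfl⟩ : ∃ K, k = K + 1 := ⟨k - 1, by omega⟩
  set f : ℕ → ℝ := fun i => (-1) ^ i * surjCount K i
  have hterm (i : ℕ) :
      (-1 : ℝ) ^ (1 + i - 1) / (1 + i : ℕ) * surjCount (K + 1) (1 + i) = f i - f (i + 1) := by
    rw [add_comm 1 i, Nat.add_sub_cancel, surjCount_succ_succ]
    push_cast
    field_simp
    ring
  rw [← Ico_add_one_right_eq_Icc, sum_Ico_eq_sum_range, Nat.add_sub_cancel]
  simp only [hterm, sum_range_sub', f, surjCount_zero_right (show K ≠ 0 by omega),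
    surjCount_eq_zero_of_lt (Nat.lt_succ_self K)]
  simp

theorem linear_lambda_vanishes (k : ℕ) (hk : 2 ≤ k) (α : Fin k → ℝ) :
    ∑ m ∈ Finset.Icc 1 k, ((-1 : ℝ) ^ (m - 1) / m) *
      ∑ σ ∈ Finset.univ.filter (fun σ : Fin k → Fin m => Function.Surjective σ),
        ∑ j : Fin m, ∑ i ∈ Finset.univ.filter (fun i => σ i = j), α i = 0 := by
  have hfiber (m : ℕ) :
      ∑ σ ∈ univ.filter (fun σ : Fin k → Fin m => Surjective σ),
        ∑ j : Fin m, ∑ i ∈ univ.filter (fun i => σ i = j), α i =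
          surjCount k m * ∑ i, α i := by
    simp only [sum_fiberwise, sum_const, nsmul_eq_mul, surjCount]
  simp_rw [hfiber, ← mul_assoc, ← sum_mul, sum_Icc_alternating_surjCount hk, zero_mul]
end

section
/- Let μ_n be a rotation-invariant probability measure on ℂ with finite moments M(2ℓ) = ∫|z|^{2ℓ} dμ_n, and consider the n-point determinantal process with kernel K_n(z, w̄) = Σ_{ℓ=0}^{n-1} c_ℓ (z w̄)^ℓ, c_ℓ = M(2ℓ)^{-1}, with joint density (1/Z_n) ∏_{j<k} |z_j − z_k|² with respect to μ_n^⊗n, Z_n = n! ∏_{ℓ=0}^{n-1} M(2ℓ). Then for partitions λ, π with at most n parts, E[s_λ(z₁,...,z_n) conj(s_π(z₁,...,z_n))] = δ_{λπ} ∏_{ℓ=0}^{n-1} M(2(n + λ_ℓ − ℓ − 1)) / M(2(n − ℓ − 1)). -/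
/-!
Write `V(z) = det (z_k ^ (n - 1 - ℓ))`, so that `s_ν = det (z_k ^ (ν_ℓ + n - 1 - ℓ)) / V` and
`∏_{j<k} |z_j - z_k|² = V · conj V`. The density therefore cancels both denominators and the
expectation becomes `∫ det (z_k ^ a_ℓ) · conj det (z_k ^ b_ℓ) dμ^⊗n` for the shifted exponents
`a = λ + δ`, `b = π + δ`, where `δ_ℓ = n - 1 - ℓ`. By Andreief's identity this is `n!` times the
determinant of the Gram matrix `(∫ z ^ a_i · conj z ^ b_j dμ)`, and rotation invariance makes
that entry vanish unless `a_i = b_j`. For strictly decreasing exponents the Gram matrix is diagonal when `a = b`, and has a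
zero row or column otherwise.
-/

open MeasureTheory Finset Complex ComplexConjugate

namespace Matrix

variable {ι β R : Type*} [Fintype ι] [DecidableEq ι] [DecidableEq β] [CommRing R]

theorem sum_perm_sign_mul_prod_comp (G : Matrix ι ι R) (σ : Equiv.Perm ι) :
    ∑ τ : Equiv.Perm ι, (Equiv.Perm.sign τ : R) * ∏ k, G (σ k) (τ k) =
      Equiv.Perm.sign σ * G.det := by
  rw [← det_permute, ← det_transpose, det_apply']
  rfl

theorem det_of_ite_apply_eq_of_injective {a : ι → β} (ha : a.Injective) (d : ι → R) :
    (of fun i j => if a i = a j then d i else 0).det = ∏ i, d i := by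
  rw [← det_diagonal]
  congr 1
  ext i j
  simp [diagonal_apply, ha.eq_iff]

theorem det_of_ite_apply_eq_eq_zero {a b : ι → β} (hab : Set.range a ≠ Set.range b) (d : ι → R) :
    (of fun i j => if a i = b j then d i else 0).det = 0 := by
  by_cases hsub : Set.range a ⊆ Set.range b
  · obtain ⟨_, ⟨j, rfl⟩, hj⟩ := Set.not_subset.mp fun h => hab (hsub.antisymm h)
    exact det_eq_zero_of_column_eq_zero j fun i => if_neg fun h => hj ⟨i, h⟩
  · obtain ⟨_, ⟨i, rfl⟩, hi⟩ := Set.not_subset.mp hsub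
    exact det_eq_zero_of_row_eq_zero i fun j => if_neg fun h => hi ⟨j, h.symm⟩


theorem of_pow_rev_eq_vandermonde_submatrix {R : Type*} [CommRing R] {n : ℕ} (z : Fin n → R) :
    (of fun k ℓ : Fin n => z k ^ (n - 1 - (ℓ : ℕ))) =
      (vandermonde z).submatrix id Fin.revPerm := by
  ext k ℓ
  simp only [of_apply, submatrix_apply, vandermonde_apply, id_eq, Fin.revPerm_apply, Fin.val_rev]
  congr 1
  omega

theorem det_of_pow_eq_zero_of_not_injective {R : Type*} [CommRing R] {n : ℕ} {z : Fin n → R}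
    (hz : ¬z.Injective) (e : Fin n → ℕ) : (of fun k ℓ : Fin n => z k ^ e ℓ).det = 0 := by
  obtain ⟨i, j, hij, hne⟩ := Function.not_injective_iff.mp hz
  exact det_zero_of_row_eq hne (funext fun ℓ => by simp [hij])

theorem norm_det_vandermonde {𝕜 : Type*} [NormedField 𝕜] {n : ℕ} (z : Fin n → 𝕜) :
    ‖(vandermonde z).det‖ =
      ∏ p ∈ univ.filter (fun p : Fin n × Fin n => p.1 < p.2), ‖z p.1 - z p.2‖ := by
  rw [det_vandermonde, norm_prod,
    prod_finset_product _ univ (fun i => Ioi i) (by simp)]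
  simp only [norm_prod, norm_sub_rev]

theorem norm_det_of_pow_rev {𝕜 : Type*} [NormedField 𝕜] {n : ℕ} (z : Fin n → 𝕜) :
    ‖(of fun k ℓ : Fin n => z k ^ (n - 1 - (ℓ : ℕ))).det‖ = ‖(vandermonde z).det‖ := by
  rw [of_pow_rev_eq_vandermonde_submatrix, det_permute', norm_mul]
  rcases Int.units_eq_one_or (Equiv.Perm.sign (Fin.revPerm : Equiv.Perm (Fin n))) with h | h <;>
    simp [h]

end Matrix

open Matrix

/-- Andreief's identity. -/
theorem integral_det_mul_det {ι α 𝕜 : Type*} [Fintype ι] [DecidableEq ι] [RCLike 𝕜]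
    [MeasurableSpace α] (μ : Measure α) [SigmaFinite μ] (f g : ι → α → 𝕜)
    (hfg : ∀ i j, Integrable (fun x => f i x * g j x) μ) :
    ∫ x : ι → α, (of fun k i => f i (x k)).det * (of fun k j => g j (x k)).det
        ∂(Measure.pi fun _ => μ) =
      ((Fintype.card ι).factorial : 𝕜) * (of fun i j => ∫ x, f i x * g j x ∂μ).det := by
  set G := of fun i j => ∫ x, f i x * g j x ∂μ
  have hexpand : ∀ x : ι → α,
      (of fun k i => f i (x k)).det * (of fun k j => g j (x k)).det =
        ∑ σ : Equiv.Perm ι, ∑ τ : Equiv.Perm ι,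
          (Equiv.Perm.sign σ : 𝕜) * Equiv.Perm.sign τ * ∏ k, f (σ k) (x k) * g (τ k) (x k) := by
    intro x
    rw [← det_transpose, det_apply', ← det_transpose, det_apply',
      sum_mul_sum]
    simp only [transpose_apply, of_apply, prod_mul_distrib]
    exact sum_congr rfl fun σ _ => sum_congr rfl fun τ _ => by ring
  have hint : ∀ σ τ : Equiv.Perm ι,
      Integrable (fun x : ι → α => ∏ k, f (σ k) (x k) * g (τ k) (x k)) (Measure.pi fun _ => μ) :=
    fun σ τ => Integrable.fintype_prod fun k => hfg (σ k) (τ k)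
  calc _ = ∑ σ : Equiv.Perm ι, ∑ τ : Equiv.Perm ι,
          (Equiv.Perm.sign σ : 𝕜) * Equiv.Perm.sign τ * ∏ k, G (σ k) (τ k) := by
        simp only [hexpand]
        rw [integral_finsetSum _ fun σ _ => integrable_finsetSum _ fun τ _ =>
          (hint σ τ).const_mul _]
        refine sum_congr rfl fun σ _ => ?_
        rw [integral_finsetSum _ fun τ _ => (hint σ τ).const_mul _]
        refine sum_congr rfl fun τ _ => ?_
        rw [integral_const_mul, integral_fintype_prod_eq_prod (fun k x => f (σ k) x * g (τ k) x)]
        rfl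
    _ = ∑ _σ : Equiv.Perm ι, G.det := by
        refine sum_congr rfl fun σ _ => ?_
        simp only [mul_assoc, ← mul_sum, sum_perm_sign_mul_prod_comp]
        rw [← mul_assoc, ← Int.cast_mul, ← Units.val_mul, Int.units_mul_self, Units.val_one,
          Int.cast_one, one_mul]
    _ = _ := by simp [Fintype.card_perm]

theorem integrable_pow_mul_conj_pow {μ : Measure ℂ}
    (hmom : ∀ k : ℕ, Integrable (fun z => ‖z‖ ^ k) μ) (p q : ℕ) :
    Integrable (fun z : ℂ => z ^ p * conj z ^ q) μ := by
  refine (hmom (p + q)).mono' (by fun_prop) (.of_forall fun z => ?_)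
  simp [pow_add]

theorem integral_pow_mul_conj_pow_self (μ : Measure ℂ) (p : ℕ) :
    ∫ z, z ^ p * conj z ^ p ∂μ = ((∫ z, ‖z‖ ^ (2 * p) ∂μ : ℝ) : ℂ) := by
  rw [← integral_complex_ofReal]
  congr 1 with z
  rw [← mul_pow, mul_conj', pow_mul']
  push_cast
  ring

theorem integral_comp_rotation {μ : Measure ℂ}
    (hrot : ∀ θ : ℝ, Measure.map (fun z => exp (θ * I) * z) μ = μ) (θ : ℝ)
    {f : ℂ → ℂ} (hf : Continuous f) :
    ∫ z, f (exp (θ * I) * z) ∂μ = ∫ z, f z ∂μ := by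
  conv_rhs => rw [← hrot θ]
  rw [integral_map (by fun_prop) hf.aestronglyMeasurable]

theorem integral_pow_mul_conj_pow_eq_zero {μ : Measure ℂ}
    (hrot : ∀ θ : ℝ, Measure.map (fun z => exp (θ * I) * z) μ = μ) {p q : ℕ} (hpq : p ≠ q) :
    ∫ z, z ^ p * conj z ^ q ∂μ = 0 := by
  have hd : ((p : ℝ) - q) ≠ 0 := sub_ne_zero.2 (Nat.cast_injective.ne hpq)
  set θ : ℝ := Real.pi / ((p : ℝ) - q)
  -- rotating by `θ` multiplies the integrand by `exp (i θ (p - q)) = -1`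
  have hrotate : ∀ z : ℂ, (exp (θ * I) * z) ^ p * conj (exp (θ * I) * z) ^ q =
      -(z ^ p * conj z ^ q) := by
    intro z
    have hphase : exp (θ * I) ^ p * conj (exp (θ * I)) ^ q = -1 := by
      rw [← exp_conj, map_mul, conj_ofReal, conj_I, ← exp_nat_mul, ← exp_nat_mul, ← exp_add,
        ← exp_pi_mul_I]
      congr 1
      have hpi : ((((p : ℝ) - q) * θ : ℝ) : ℂ) * I = Real.pi * I := by
        rw [mul_div_cancel₀ _ hd]
      push_cast at hpi
      linear_combination hpi
    rw [map_mul, mul_pow, mul_pow]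
    linear_combination (z ^ p * conj z ^ q) * hphase
  have h := integral_comp_rotation hrot θ (f := fun z => z ^ p * conj z ^ q) (by fun_prop)
  simp only [hrotate, integral_neg] at h
  linear_combination -h / 2

theorem integral_pow_mul_conj_pow {μ : Measure ℂ}
    (hrot : ∀ θ : ℝ, Measure.map (fun z => exp (θ * I) * z) μ = μ) (p q : ℕ) :
    ∫ z, z ^ p * conj z ^ q ∂μ = if p = q then ((∫ z, ‖z‖ ^ (2 * p) ∂μ : ℝ) : ℂ) else 0 := by
  split_ifs with hpq
  · rw [hpq, integral_pow_mul_conj_pow_self]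
  · exact integral_pow_mul_conj_pow_eq_zero hrot hpq

theorem det_of_pow_rev_mul_conj {n : ℕ} (z : Fin n → ℂ) :
    (of fun k ℓ : Fin n => z k ^ (n - 1 - (ℓ : ℕ))).det *
        conj (of fun k ℓ : Fin n => z k ^ (n - 1 - (ℓ : ℕ))).det =
      ∏ p ∈ univ.filter (fun p : Fin n × Fin n => p.1 < p.2), ((‖z p.1 - z p.2‖ : ℝ) : ℂ) ^ 2 := by
  rw [mul_conj', norm_det_of_pow_rev, norm_det_vandermonde]
  push_cast
  rw [prod_pow]

theorem div_mul_conj_div_mul_prod_norm_sq {n : ℕ} (a b : Fin n → ℕ) (z : Fin n → ℂ) :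
    (of fun k ℓ : Fin n => z k ^ a ℓ).det / (of fun k ℓ : Fin n => z k ^ (n - 1 - (ℓ : ℕ))).det *
        conj ((of fun k ℓ : Fin n => z k ^ b ℓ).det /
          (of fun k ℓ : Fin n => z k ^ (n - 1 - (ℓ : ℕ))).det) *
        ∏ p ∈ univ.filter (fun p : Fin n × Fin n => p.1 < p.2), ((‖z p.1 - z p.2‖ : ℝ) : ℂ) ^ 2 =
      (of fun k ℓ : Fin n => z k ^ a ℓ).det * conj (of fun k ℓ : Fin n => z k ^ b ℓ).det := by
  rw [← det_of_pow_rev_mul_conj]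
  by_cases hz : z.Injective
  · have hV : (of fun k ℓ : Fin n => z k ^ (n - 1 - (ℓ : ℕ))).det ≠ 0 := by
      rw [← norm_ne_zero_iff, norm_det_of_pow_rev, norm_ne_zero_iff]
      exact det_vandermonde_ne_zero_iff.mpr hz
    have hV' := (map_ne_zero (starRingEnd ℂ)).mpr hV
    rw [map_div₀]
    field_simp
  · simp [det_of_pow_eq_zero_of_not_injective hz]

theorem integral_det_pow_mul_conj_det_pow {n : ℕ} {μ : Measure ℂ} [SigmaFinite μ]
    (hrot : ∀ θ : ℝ, Measure.map (fun z => exp (θ * I) * z) μ = μ)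
    (hmom : ∀ k : ℕ, Integrable (fun z => ‖z‖ ^ k) μ)
    {a b : Fin n → ℕ} (ha : StrictAnti a) (hb : StrictAnti b) :
    ∫ z : Fin n → ℂ, (of fun k ℓ => z k ^ a ℓ).det * conj (of fun k ℓ => z k ^ b ℓ).det
        ∂(Measure.pi fun _ => μ) =
      if a = b then (n.factorial : ℂ) * ∏ ℓ, ((∫ z, ‖z‖ ^ (2 * a ℓ) ∂μ : ℝ) : ℂ) else 0 := by
  have hconj : ∀ z : Fin n → ℂ, conj (of fun k ℓ => z k ^ b ℓ).det =
      (of fun k ℓ => conj (z k) ^ b ℓ).det := fun z => by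
    rw [RingHom.map_det]
    congr 1 with k ℓ
    simp
  simp only [hconj]
  rw [integral_det_mul_det μ (fun i w => w ^ a i) (fun j w => conj w ^ b j)
    fun i j => integrable_pow_mul_conj_pow hmom _ _, Fintype.card_fin]
  simp only [integral_pow_mul_conj_pow hrot]
  split_ifs with hab
  · subst hab
    rw [det_of_ite_apply_eq_of_injective ha.injective]
  · rw [det_of_ite_apply_eq_eq_zero (mt (ha.range_inj hb).mp hab), mul_zero]

theorem Antitone.strictAnti_add_rev {n : ℕ} {ν : Fin n → ℕ} (hν : Antitone ν) :
    StrictAnti fun ℓ : Fin n => ν ℓ + (n - 1 - (ℓ : ℕ)) := fun ℓ m hlt => by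
  have := hν hlt.le
  have : (ℓ : ℕ) < m := hlt
  have := m.isLt
  dsimp only
  omega

theorem schur_expectation_general
    (n : ℕ) (μ : Measure ℂ) [IsProbabilityMeasure μ]
    (hrot : ∀ θ : ℝ, Measure.map (fun z => Complex.exp (θ * Complex.I) * z) μ = μ)
    (hmom : ∀ k : ℕ, Integrable (fun z => ‖z‖ ^ k) μ)
    (lam pi' : Fin n → ℕ) (hlam : Antitone lam) (hpi : Antitone pi') :
    let M : ℕ → ℝ := fun k => ∫ z, ‖z‖ ^ k ∂μ
    let Z : ℝ := Nat.factorial n * ∏ ℓ ∈ Finset.range n, M (2 * ℓ)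
    let s : (Fin n → ℕ) → (Fin n → ℂ) → ℂ := fun ν z =>
      Matrix.det (Matrix.of fun k ℓ : Fin n => z k ^ (ν ℓ + (n - 1 - (ℓ : ℕ)))) /
        Matrix.det (Matrix.of fun k ℓ : Fin n => z k ^ (n - 1 - (ℓ : ℕ)))
    (1 / (Z : ℂ)) *
        ∫ z : Fin n → ℂ,
          s lam z * starRingEnd ℂ (s pi' z) *
            ∏ p ∈ Finset.univ.filter (fun p : Fin n × Fin n => p.1 < p.2),
              (((‖z p.1 - z p.2‖ : ℝ) : ℂ)) ^ 2
          ∂(Measure.pi fun _ : Fin n => μ)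
      = (if lam = pi' then 1 else 0) *
          ∏ ℓ : Fin n,
            ((M (2 * (lam ℓ + (n - 1 - (ℓ : ℕ)))) : ℂ) / (M (2 * (n - 1 - (ℓ : ℕ))) : ℂ)) := by
  intro M Z s
  have hZ : (Z : ℂ) = n.factorial * ∏ ℓ : Fin n, (M (2 * (n - 1 - (ℓ : ℕ))) : ℂ) := by
    rw [Fin.prod_univ_eq_prod_range (fun ℓ => (M (2 * (n - 1 - ℓ)) : ℂ)),
      prod_range_reflect (fun ℓ => (M (2 * ℓ) : ℂ))]
    push_cast [Z]
    rfl
  have hshift : (fun ℓ : Fin n => lam ℓ + (n - 1 - (ℓ : ℕ))) =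
      (fun ℓ : Fin n => pi' ℓ + (n - 1 - (ℓ : ℕ))) ↔ lam = pi' := by
    simp [funext_iff]
  simp only [s, div_mul_conj_div_mul_prod_norm_sq,
    integral_det_pow_mul_conj_det_pow hrot hmom hlam.strictAnti_add_rev hpi.strictAnti_add_rev,
    hshift, hZ]
  split_ifs
  · rw [prod_div_distrib, one_mul, one_div_mul_eq_div]
    exact mul_div_mul_left _ _ (Nat.cast_ne_zero.mpr n.factorial_ne_zero : (n.factorial : ℂ) ≠ 0)
  · simp

/-- Expectation of products of Schur polynomials for an `n`-point rotation-invariant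
symmetric polynomial projection (SPP) ensemble, with joint density
`(1/Z_n) ∏_{j<k} |z_j − z_k|²` with respect to `μ^⊗n`. -/
theorem schur_expectation
    (n : ℕ) (hn : 0 < n) (μ : Measure ℂ) [IsProbabilityMeasure μ]
    (hrot : ∀ θ : ℝ, Measure.map (fun z => Complex.exp (θ * Complex.I) * z) μ = μ)
    (hmom : ∀ k : ℕ, Integrable (fun z => ‖z‖ ^ k) μ)
    (lam pi' : Fin n → ℕ) (hlam : Antitone lam) (hpi : Antitone pi') :
    let M : ℕ → ℝ := fun k => ∫ z, ‖z‖ ^ k ∂μ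
    let Z : ℝ := Nat.factorial n * ∏ ℓ ∈ Finset.range n, M (2 * ℓ)
    let s : (Fin n → ℕ) → (Fin n → ℂ) → ℂ := fun ν z =>
      Matrix.det (Matrix.of fun k ℓ : Fin n => z k ^ (ν ℓ + (n - 1 - (ℓ : ℕ)))) /
        Matrix.det (Matrix.of fun k ℓ : Fin n => z k ^ (n - 1 - (ℓ : ℕ)))
    (1 / (Z : ℂ)) *
        ∫ z : Fin n → ℂ,
          s lam z * starRingEnd ℂ (s pi' z) *
            ∏ p ∈ Finset.univ.filter (fun p : Fin n × Fin n => p.1 < p.2),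
              (((‖z p.1 - z p.2‖ : ℝ) : ℂ)) ^ 2
          ∂(Measure.pi fun _ : Fin n => μ)
      = (if lam = pi' then 1 else 0) *
          ∏ ℓ : Fin n,
            ((M (2 * (lam ℓ + (n - 1 - (ℓ : ℕ)))) : ℂ) / (M (2 * (n - 1 - (ℓ : ℕ))) : ℂ)) :=
  schur_expectation_general n μ hrot hmom lam pi' hlam hpi
end

section
/- Let S_ℓ^n denote a sum of ℓ+1 independent exponential random variables each of mean 1/n. For 0 < a < b, there exists γ > 0 (depending on a, b) such that Σ_{ℓ=0}^{n-2} P(S_ℓ^n ≤ a²) P(S_{ℓ+1}^n ≥ b²) ≤ n e^{-γn} for all sufficiently large n. -/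
open MeasureTheory Finset

/-- `P(S_ℓ^n ≤ t)` where `S_ℓ^n` is a sum of `ℓ+1` independent exponential random
variables of mean `1/n`, i.e. a Gamma(ℓ+1, rate n) variable, written via its density. -/
noncomputable def gammaCdfLe (n ℓ : ℕ) (t : ℝ) : ℝ :=
  ∫ x in Set.Ioc (0 : ℝ) t,
    ((n : ℝ) ^ (ℓ + 1) / Nat.factorial ℓ) * x ^ ℓ * Real.exp (-(n : ℝ) * x)

/-- `P(S_ℓ^n ≥ t)`. -/
noncomputable def gammaCdfGe (n ℓ : ℕ) (t : ℝ) : ℝ :=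
  ∫ x in Set.Ici t,
    ((n : ℝ) ^ (ℓ + 1) / Nat.factorial ℓ) * x ^ ℓ * Real.exp (-(n : ℝ) * x)

/-!
Both factors are bounded by the same exponential tilt `θ = c n` (Chernoff's bound):
`P(S_ℓ^n ≤ a²) ≤ e^{c n a²} (1 + c)^{-(ℓ+1)}` and `P(S_{ℓ+1}^n ≥ b²) ≤ e^{-c n b²} (1 - c)^{-(ℓ+2)}`.
Since `ℓ + 1 ≤ n`, their product is at most `ρⁿ / (1 - c)` with `ρ = e^{-c (b² - a²)} / (1 - c²)`,
and `ρ < 1` once `c` is small, because `ρ = 1 - c (b² - a²) + O(c²)`.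
-/

open Real Set Filter

/-- The density of a Gamma(`ℓ + 1`, rate `r`) variable on `(0, ∞)`. -/
noncomputable def gammaDensity (r : ℝ) (ℓ : ℕ) (x : ℝ) : ℝ :=
  (r ^ (ℓ + 1) / ℓ.factorial) * x ^ ℓ * exp (-r * x)

section gammaDensity

variable {r : ℝ} {ℓ : ℕ}

lemma gammaDensity_nonneg (hr : 0 ≤ r) {x : ℝ} (hx : 0 ≤ x) : 0 ≤ gammaDensity r ℓ x := by
  unfold gammaDensity
  positivity

lemma integrableOn_gammaDensity_Ioi (hr : 0 < r) : IntegrableOn (gammaDensity r ℓ) (Ioi 0) := by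
  have h := integrableOn_rpow_mul_exp_neg_mul_rpow (p := 1) (s := ℓ) (b := r)
    (neg_one_lt_zero.trans_le ℓ.cast_nonneg) one_pos hr
  refine IntegrableOn.congr_fun (h.const_mul (r ^ (ℓ + 1) / ℓ.factorial)) (fun x _ => ?_)
    measurableSet_Ioi
  simp [gammaDensity, mul_assoc]

lemma integral_gammaDensity_Ioi (hr : 0 < r) : ∫ x in Ioi 0, gammaDensity r ℓ x = 1 := by
  have h := integral_rpow_mul_exp_neg_mul_Ioi (a := ℓ + 1) (by positivity) hr
  simp only [add_sub_cancel_right, Gamma_nat_eq_factorial, one_div, inv_rpow hr.le] at h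
  rw [← Nat.cast_succ, rpow_natCast] at h
  simp only [gammaDensity, mul_assoc, integral_const_mul]
  simp only [← rpow_natCast, neg_mul, h]
  field_simp

lemma setIntegral_gammaDensity_le_one (hr : 0 < r) {s : Set ℝ} (hs : s ⊆ Ioi 0) :
    ∫ x in s, gammaDensity r ℓ x ≤ 1 := by
  rw [← integral_gammaDensity_Ioi (ℓ := ℓ) hr]
  refine setIntegral_mono_set (integrableOn_gammaDensity_Ioi hr) ?_ hs.eventuallyLE
  filter_upwards [ae_restrict_mem measurableSet_Ioi] with x hx
  exact gammaDensity_nonneg hr.le (le_of_lt hx)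

lemma gammaDensity_le_tilt (hr : 0 ≤ r) {c t x : ℝ} (hc : 0 < 1 + c) (hx : 0 ≤ x)
    (hct : c * x ≤ c * t) :
    gammaDensity r ℓ x ≤ exp (c * r * t) / (1 + c) ^ (ℓ + 1) * gammaDensity ((1 + c) * r) ℓ x := by
  have hexp : exp (-r * x) ≤ exp (c * r * t) * exp (-((1 + c) * r) * x) := by
    rw [← exp_add]
    exact exp_le_exp.2 (by nlinarith [mul_le_mul_of_nonneg_left hct hr])
  have hcoef : 0 ≤ r ^ (ℓ + 1) / ℓ.factorial * x ^ ℓ := by positivity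
  calc gammaDensity r ℓ x
      ≤ r ^ (ℓ + 1) / ℓ.factorial * x ^ ℓ * (exp (c * r * t) * exp (-((1 + c) * r) * x)) :=
        mul_le_mul_of_nonneg_left hexp hcoef
    _ = _ := by
        unfold gammaDensity
        rw [mul_pow]
        field_simp

lemma setIntegral_gammaDensity_le (hr : 0 < r) {c t : ℝ} (hc : 0 < 1 + c) {s : Set ℝ}
    (hs : MeasurableSet s) (hs0 : s ⊆ Ioi 0) (hct : ∀ x ∈ s, c * x ≤ c * t) :
    ∫ x in s, gammaDensity r ℓ x ≤ exp (c * r * t) / (1 + c) ^ (ℓ + 1) := by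
  have hr' : 0 < (1 + c) * r := mul_pos hc hr
  calc ∫ x in s, gammaDensity r ℓ x
      ≤ ∫ x in s, exp (c * r * t) / (1 + c) ^ (ℓ + 1) * gammaDensity ((1 + c) * r) ℓ x :=
        setIntegral_mono_on ((integrableOn_gammaDensity_Ioi hr).mono_set hs0)
          (((integrableOn_gammaDensity_Ioi hr').mono_set hs0).const_mul _) hs
          fun x hx => gammaDensity_le_tilt hr.le hc (le_of_lt (hs0 hx)) (hct x hx)
    _ ≤ exp (c * r * t) / (1 + c) ^ (ℓ + 1) := by
        rw [integral_const_mul]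
        exact mul_le_of_le_one_right (by positivity) (setIntegral_gammaDensity_le_one hr' hs0)

end gammaDensity

section gammaCdf

variable {n ℓ : ℕ} {c : ℝ}

lemma gammaCdfLe_le (hn : 0 < n) (hc : 0 ≤ c) (t : ℝ) :
    gammaCdfLe n ℓ t ≤ exp (c * n * t) / (1 + c) ^ (ℓ + 1) :=
  setIntegral_gammaDensity_le (by positivity) (by linarith) measurableSet_Ioc Ioc_subset_Ioi_self
    fun _ hx => mul_le_mul_of_nonneg_left hx.2 hc

lemma gammaCdfGe_le (hn : 0 < n) (hc0 : 0 ≤ c) (hc1 : c < 1) {t : ℝ} (ht : 0 < t) :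
    gammaCdfGe n ℓ t ≤ exp (-(c * n * t)) / (1 - c) ^ (ℓ + 1) := by
  have h := setIntegral_gammaDensity_le (ℓ := ℓ) (r := n) (c := -c) (t := t) (by positivity)
    (by linarith) measurableSet_Ici (fun x hx => ht.trans_le hx)
    fun _ hx => mul_le_mul_of_nonpos_left hx (neg_nonpos.2 hc0)
  rwa [neg_mul, neg_mul, ← sub_eq_add_neg] at h

lemma gammaCdfGe_nonneg {t : ℝ} (ht : 0 ≤ t) : 0 ≤ gammaCdfGe n ℓ t :=
  setIntegral_nonneg measurableSet_Ici fun _ hx => gammaDensity_nonneg n.cast_nonneg (ht.trans hx)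

lemma gammaCdfLe_mul_gammaCdfGe_succ_le (hc0 : 0 ≤ c) (hc1 : c < 1) {s t : ℝ} (ht : 0 < t)
    (hℓ : ℓ + 1 ≤ n) :
    gammaCdfLe n ℓ s * gammaCdfGe n (ℓ + 1) t
      ≤ (exp (-(c * (t - s))) / (1 - c ^ 2)) ^ n / (1 - c) := by
  have hn : 0 < n := by omega
  have h1c : 0 < 1 - c := by linarith
  have hsq : 1 - c ^ 2 = (1 + c) * (1 - c) := by ring
  have hsq0 : 0 < 1 - c ^ 2 := by rw [hsq]; positivity
  calc gammaCdfLe n ℓ s * gammaCdfGe n (ℓ + 1) t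
      ≤ exp (c * n * s) / (1 + c) ^ (ℓ + 1) * (exp (-(c * n * t)) / (1 - c) ^ (ℓ + 1 + 1)) :=
        mul_le_mul (gammaCdfLe_le hn hc0 s) (gammaCdfGe_le hn hc0 hc1 ht)
          (gammaCdfGe_nonneg ht.le) (by positivity)
    _ = exp (-(c * (t - s))) ^ n / ((1 - c ^ 2) ^ (ℓ + 1) * (1 - c)) := by
        rw [← exp_nat_mul, hsq, mul_pow]
        field_simp
        rw [← exp_add]
        ring_nf
    _ ≤ exp (-(c * (t - s))) ^ n / ((1 - c ^ 2) ^ n * (1 - c)) := by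
        refine div_le_div_of_nonneg_left (by positivity) (by positivity) ?_
        exact mul_le_mul_of_nonneg_right (pow_le_pow_of_le_one hsq0.le (by nlinarith) hℓ) h1c.le
    _ = (exp (-(c * (t - s))) / (1 - c ^ 2)) ^ n / (1 - c) := by
        rw [div_pow, div_div]

end gammaCdf

lemma exists_exp_neg_mul_lt_one_sub_sq {d : ℝ} (hd : 0 < d) :
    ∃ c, 0 ≤ c ∧ c < 1 ∧ exp (-(c * d)) < 1 - c ^ 2 := by
  set c := min (1 / 2) (d / 4)
  have hc0 : 0 < c := lt_min (by norm_num) (by positivity)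
  have hc1 : c ≤ 1 / 2 := min_le_left _ _
  have hcd : c ≤ d / 4 := min_le_right _ _
  refine ⟨c, hc0.le, by linarith, ?_⟩
  have hcd0 : 0 < c * d := mul_pos hc0 hd
  -- `(1 - c²) (1 + c d) - 1 = c (d - c - c² d) > 0`
  have hprod : 1 < (1 - c ^ 2) * (1 + c * d) := by
    nlinarith [mul_le_mul_of_nonneg_left hc1 hcd0.le, mul_le_mul_of_nonneg_left hcd hc0.le]
  rw [exp_neg, inv_lt_iff_one_lt_mul₀ (exp_pos _)]
  calc 1 < (1 - c ^ 2) * (1 + c * d) := hprod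
    _ ≤ (1 - c ^ 2) * exp (c * d) := by
        gcongr
        · nlinarith
        · linarith [add_one_le_exp (c * d)]

lemma exists_pos_eventually_mul_pow_le_exp {ρ : ℝ} (hρ0 : 0 ≤ ρ) (hρ1 : ρ < 1) (K : ℝ) :
    ∃ γ, 0 < γ ∧ ∀ᶠ n : ℕ in atTop, K * ρ ^ n ≤ exp (-γ * n) := by
  obtain ⟨q, hρq, hq1⟩ := exists_between hρ1
  have hq0 : 0 < q := hρ0.trans_lt hρq
  refine ⟨-log q, neg_pos.2 (log_neg hq0 hq1), ?_⟩
  have hlim : Tendsto (fun n : ℕ => K * (ρ / q) ^ n) atTop (nhds 0) := by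
    simpa using (tendsto_pow_atTop_nhds_zero_of_lt_one (div_nonneg hρ0 hq0.le)
      ((div_lt_one hq0).2 hρq)).const_mul K
  filter_upwards [hlim.eventually (ge_mem_nhds one_pos)] with n hn
  calc K * ρ ^ n = K * (ρ / q) ^ n * q ^ n := by rw [div_pow]; field_simp
    _ ≤ 1 * q ^ n := by gcongr
    _ = exp (-(-log q) * n) := by rw [neg_neg, one_mul, mul_comm, exp_nat_mul, exp_log hq0]

theorem exponential_sum_gap_bound (a b : ℝ) (ha : 0 < a) (hab : a < b) :
    ∃ γ : ℝ, 0 < γ ∧ ∃ N : ℕ, ∀ n : ℕ, N ≤ n →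
      ∑ ℓ ∈ Finset.range (n - 1), gammaCdfLe n ℓ (a ^ 2) * gammaCdfGe n (ℓ + 1) (b ^ 2)
        ≤ (n : ℝ) * Real.exp (-γ * n) := by
  have hd : 0 < b ^ 2 - a ^ 2 := sub_pos.2 (pow_lt_pow_left₀ hab ha.le two_ne_zero)
  obtain ⟨c, hc0, hc1, hgap⟩ := exists_exp_neg_mul_lt_one_sub_sq hd
  set ρ := exp (-(c * (b ^ 2 - a ^ 2))) / (1 - c ^ 2)
  have hρ0 : 0 ≤ ρ := div_nonneg (exp_pos _).le ((exp_pos _).trans hgap).le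
  have hρ1 : ρ < 1 := (div_lt_one ((exp_pos _).trans hgap)).2 hgap
  obtain ⟨γ, hγ, hev⟩ := exists_pos_eventually_mul_pow_le_exp hρ0 hρ1 (1 - c)⁻¹
  obtain ⟨N, hN⟩ := eventually_atTop.1 hev
  refine ⟨γ, hγ, N, fun n hn => ?_⟩
  have hterm : ∀ ℓ ∈ range (n - 1),
      gammaCdfLe n ℓ (a ^ 2) * gammaCdfGe n (ℓ + 1) (b ^ 2) ≤ exp (-γ * n) := fun ℓ hℓ =>
    calc _ ≤ ρ ^ n / (1 - c) :=
          gammaCdfLe_mul_gammaCdfGe_succ_le hc0 hc1 (pow_pos (ha.trans hab) 2) (by simp at hℓ; omega)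
      _ = (1 - c)⁻¹ * ρ ^ n := by rw [div_eq_inv_mul]
      _ ≤ exp (-γ * n) := hN n hn
  calc _ ≤ ∑ _ℓ ∈ range (n - 1), exp (-γ * n) := sum_le_sum hterm
    _ = ((n - 1 : ℕ) : ℝ) * exp (-γ * n) := by rw [sum_const, card_range, nsmul_eq_mul]
    _ ≤ n * exp (-γ * n) := by gcongr; exact_mod_cast n.sub_le 1
end
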